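/- arXiv:1605.07269 — 4 statements merged into one kernel-verified Lean document; each statement's English description precedes it below -/
import Mathlib

section
/- Let T be a compact normal operator on a nonzero complex Hilbert space. Then there exists an eigenvalue λ of T with |λ| = ‖T‖; in particular if T ≠ 0 then T has a nonzero eigenvalue. -/
/-!
For a normal element of a C⋆-algebra the spectral radius equals the norm, so the compact, nonempty
spectrum of `T` contains a point `λ` with `|λ| = ‖T‖`. If `λ ≠ 0`, the Fredholm alternative for
compact operators makes `λ` an eigenvalue; if `λ = 0` then `T = 0` and every nonzero vector is an
eigenvector.
-/

open Module End

theorem IsStarNormal.exists_mem_spectrum_norm_eq {A : Type*} [CStarAlgebra A] [Nontrivial A]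
    (a : A) [IsStarNormal a] : ∃ z ∈ spectrum ℂ a, ‖z‖ = ‖a‖ := by
  obtain ⟨z, hz, hza⟩ := spectrum.exists_nnnorm_eq_spectralRadius a
  rw [IsStarNormal.spectralRadius_eq_nnnorm, ENNReal.coe_inj] at hza
  exact ⟨z, hz, congrArg NNReal.toReal hza⟩

theorem IsCompactOperator.exists_hasEigenvalue_norm_eq {H : Type*} [NormedAddCommGroup H]
    [InnerProductSpace ℂ H] [CompleteSpace H] [Nontrivial H] {T : H →L[ℂ] H}
    (hT : IsCompactOperator T) [IsStarNormal T] :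
    ∃ z : ℂ, HasEigenvalue (T : End ℂ H) z ∧ ‖z‖ = ‖T‖ := by
  obtain ⟨z, hz, hzT⟩ := IsStarNormal.exists_mem_spectrum_norm_eq T
  refine ⟨z, ?_, hzT⟩
  rcases eq_or_ne z 0 with rfl | hz0
  · obtain rfl : T = 0 := norm_eq_zero.mp (by simpa using hzT.symm)
    obtain ⟨x, hx⟩ := exists_ne (0 : H)
    exact hasEigenvalue_of_hasEigenvector ⟨mem_eigenspace_iff.mpr (by simp), hx⟩
  · exact (hT.hasEigenvalue_iff_mem_spectrum hz0).mpr hz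

open ContinuousLinearMap in
theorem compact_normal_has_eigenvalue_of_max_modulus
    {H : Type*} [NormedAddCommGroup H] [InnerProductSpace ℂ H] [CompleteSpace H]
    [Nontrivial H] (T : H →L[ℂ] H) (hcpt : IsCompactOperator T)
    (hT : adjoint T ∘L T = T ∘L adjoint T) :
    ∃ lam : ℂ, (∃ x : H, x ≠ 0 ∧ T x = lam • x) ∧ ‖lam‖ = ‖T‖ ∧
      (T ≠ 0 → lam ≠ 0) := by
  have : IsStarNormal T := ⟨hT⟩
  obtain ⟨lam, hlam, hnorm⟩ := hcpt.exists_hasEigenvalue_norm_eq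
  obtain ⟨x, hx⟩ := hlam.exists_hasEigenvector
  refine ⟨lam, ⟨x, hx.2, hx.apply_eq_smul⟩, hnorm, fun hT0 hlam0 => hT0 ?_⟩
  rw [← norm_eq_zero, ← hnorm, hlam0, norm_zero]
end

section
/- Let B be a positive bounded operator on a Hilbert space H and ε > 0. Then there exists a rank-one positive operator C with ‖C‖ ≤ ε such that B + C attains its norm, i.e., there exists a unit vector y with (B+C)y = ‖B+C‖·y. -/
/-!
Choose a unit vector `u` with `⟪B u, u⟫ > ‖B‖ - ε` and put `C = ε ⟪u, ·⟫ u`. Then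
`‖B + C‖ ≥ ⟪(B + C) u, u⟫ > ‖B‖`, so `λ = ‖B + C‖` lies in the spectrum of the positive operator
`B + C` but not in that of `B`. Now `λ - B - C = (λ - B)(1 - K)` with `K = (λ - B)⁻¹ C` of rank one,
hence `K² = t K` for a scalar `t`; if `t ≠ 1` then `1 - K` is invertible with inverse
`1 + (1 - t)⁻¹ K`, so `t = 1` and `(λ - B)⁻¹ u` is an eigenvector of `B + C` for `λ`.
-/

open InnerProductSpace

theorem isUnit_one_sub_of_mul_self_eq_smul {𝕜 A : Type*} [Field 𝕜] [Ring A] [Algebra 𝕜 A]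
    {K : A} {t : 𝕜} (hK : K * K = t • K) (ht : t ≠ 1) : IsUnit (1 - K) := by
  set s := (1 - t)⁻¹
  have hs : s - 1 - s * t = 0 := by
    have : 1 - t ≠ 0 := sub_ne_zero.mpr ht.symm
    simp only [s]; field_simp; ring
  refine isUnit_iff_exists.mpr ⟨1 + s • K, ?_, ?_⟩
  · simp only [sub_mul, mul_add, one_mul, mul_one, mul_smul_comm, hK]
    calc _ = 1 + (s - 1 - s * t) • K := by module
      _ = 1 := by rw [hs, zero_smul, add_zero]
  · simp only [mul_sub, add_mul, one_mul, mul_one, smul_mul_assoc, hK, smul_smul]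
    calc _ = 1 + (s - 1 - s * t) • K := by module
      _ = 1 := by rw [hs, zero_smul, add_zero]

namespace ContinuousLinearMap

section NormedSpace

variable {𝕜 E : Type*} [NontriviallyNormedField 𝕜] [NormedAddCommGroup E] [NormedSpace 𝕜 E]

theorem smulRight_mul_smulRight_self (w : E →L[𝕜] 𝕜) (y : E) :
    w.smulRight y * w.smulRight y = w y • w.smulRight y := by
  ext x; simp [smul_smul, mul_comm]

theorem isUnit_one_sub_smulRight {w : E →L[𝕜] 𝕜} {y : E} (h : w y ≠ 1) :
    IsUnit (1 - w.smulRight y) :=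
  isUnit_one_sub_of_mul_self_eq_smul (smulRight_mul_smulRight_self w y) h

theorem isUnit_sub_smulRight (D : (E →L[𝕜] E)ˣ) {w : E →L[𝕜] 𝕜} {u : E}
    (h : w ((↑D⁻¹ : E →L[𝕜] E) u) ≠ 1) : IsUnit (↑D - w.smulRight u) := by
  have : (↑D - w.smulRight u : E →L[𝕜] E) = D * (1 - w.smulRight ((↑D⁻¹ : E →L[𝕜] E) u)) := by
    ext x; simp [mul_sub, ← mul_apply_eq_comp]
  rw [this]
  exact D.isUnit.mul (isUnit_one_sub_smulRight h)

theorem exists_apply_eq_smul_of_mem_spectrum_add_smulRight {B : E →L[𝕜] E} {k : 𝕜}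
    (w : E →L[𝕜] 𝕜) (u : E) (hB : k ∉ spectrum 𝕜 B)
    (hk : k ∈ spectrum 𝕜 (B + w.smulRight u)) :
    ∃ v ≠ 0, (B + w.smulRight u) v = k • v := by
  obtain ⟨D, hD⟩ := spectrum.notMem_iff.mp hB
  have hsub : algebraMap 𝕜 (E →L[𝕜] E) k - (B + w.smulRight u) = ↑D - w.smulRight u := by
    rw [hD]; abel
  set v := (↑D⁻¹ : E →L[𝕜] E) u with hv
  by_cases h : w v = 1
  · refine ⟨v, fun h0 ↦ by simp [h0] at h, ?_⟩
    have : (algebraMap 𝕜 (E →L[𝕜] E) k - (B + w.smulRight u)) v = 0 := by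
      rw [hsub, sub_apply, hv, ← mul_apply_eq_comp, D.mul_inv, ← hv, smulRight_apply, h,
        one_smul, one_apply_eq_self, sub_self]
    rw [sub_apply, algebraMap_apply, sub_eq_zero] at this
    exact this.symm
  · exact absurd (hsub ▸ isUnit_sub_smulRight D h) (spectrum.mem_iff.mp hk)

end NormedSpace

section RCLike

variable {𝕜 E : Type*} [RCLike 𝕜] [NormedAddCommGroup E] [InnerProductSpace 𝕜 E]

theorem IsPositive.exists_norm_eq_one_lt_rayleighQuotient [Nontrivial E] {T : E →L[𝕜] E}
    (hT : T.IsPositive) {c : ℝ} (hc : c < ‖T‖) :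
    ∃ u : E, ‖u‖ = 1 ∧ c < T.rayleighQuotient u := by
  have hR : ∀ x, 0 ≤ T.rayleighQuotient x := fun x ↦ div_nonneg (hT.2 x) (sq_nonneg _)
  rw [T.norm_eq_iSup_rayleighQuotient hT.isSymmetric] at hc
  obtain ⟨x, hx⟩ := exists_lt_of_lt_ciSup hc
  rw [abs_of_nonneg (hR x)] at hx
  obtain ⟨y, hy0, hy⟩ : ∃ y ≠ 0, c < T.rayleighQuotient y := by
    obtain rfl | hx0 := eq_or_ne x 0
    · obtain ⟨y, hy0⟩ := exists_ne (0 : E)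
      exact ⟨y, hy0, hx.trans_le (by simpa using hR y)⟩
    · exact ⟨x, hx0, hx⟩
  exact ⟨(‖y‖⁻¹ : 𝕜) • y, norm_smul_inv_norm hy0, by rwa [T.rayleigh_smul y (by simpa)]⟩

end RCLike

section Complex

variable {E : Type*} [NormedAddCommGroup E] [InnerProductSpace ℂ E] [CompleteSpace E]
  [Nontrivial E]

theorem IsPositive.norm_mem_spectrum {T : E →L[ℂ] E} (hT : T.IsPositive) :
    (‖T‖ : ℂ) ∈ spectrum ℂ T :=
  spectrum.algebraMap_mem ℂ <|
    CStarAlgebra.norm_mem_spectrum_of_nonneg ((nonneg_iff_isPositive T).mpr hT)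

theorem IsPositive.exists_apply_eq_norm_smul_of_add_smulRight {B : E →L[ℂ] E} {w : E →L[ℂ] ℂ}
    {u : E} (hT : (B + w.smulRight u).IsPositive) (hB : ‖B‖ < ‖B + w.smulRight u‖) :
    ∃ y : E, ‖y‖ = 1 ∧ (B + w.smulRight u) y = ‖B + w.smulRight u‖ • y := by
  have hnotmem : (‖B + w.smulRight u‖ : ℂ) ∉ spectrum ℂ B := fun h ↦ by
    have := spectrum.norm_le_norm_of_mem h
    rw [Complex.norm_real, norm_norm] at this
    exact this.not_gt hB
  obtain ⟨v, hv0, hv⟩ :=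
    exists_apply_eq_smul_of_mem_spectrum_add_smulRight w u hnotmem hT.norm_mem_spectrum
  refine ⟨(‖v‖⁻¹ : ℂ) • v, norm_smul_inv_norm hv0, ?_⟩
  rw [map_smul, hv, smul_comm, Complex.coe_smul]

end Complex

end ContinuousLinearMap

open ContinuousLinearMap in
theorem positive_plus_small_rank_one_attains_norm
    {H : Type*} [NormedAddCommGroup H] [InnerProductSpace ℂ H] [CompleteSpace H]
    [Nontrivial H] (B : H →L[ℂ] H) (hBsa : IsSelfAdjoint B)
    (hBpos : ∀ x : H, 0 ≤ (inner ℂ x (B x) : ℂ).re)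
    (ε : ℝ) (hε : 0 < ε) :
    ∃ C : H →L[ℂ] H, IsSelfAdjoint C ∧ (∀ x : H, 0 ≤ (inner ℂ x (C x) : ℂ).re) ∧
      Module.finrank ℂ (LinearMap.range (C : H →ₗ[ℂ] H)) = 1 ∧ ‖C‖ ≤ ε ∧
      ∃ y : H, ‖y‖ = 1 ∧ (B + C) y = ‖B + C‖ • y := by
  have hB : B.IsPositive := isPositive_def'.mpr ⟨hBsa, fun x ↦ by
    rw [reApplyInnerSelf_apply, inner_re_symm]; exact hBpos x⟩
  obtain ⟨u, hu, hBu⟩ := hB.exists_norm_eq_one_lt_rayleighQuotient (sub_lt_self ‖B‖ hε)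
  have hu0 : u ≠ 0 := norm_ne_zero_iff.mp (by simp [hu])
  set C := (ε : ℂ) • rankOne ℂ u u
  have hCu : C u = (ε : ℂ) • u := by simp [C, inner_self_eq_norm_sq_to_K, hu]
  have hC : C.IsPositive :=
    (isPositive_rankOne_self u).smul_of_nonneg (Complex.zero_le_real.mpr hε.le)
  have hBC : ‖B‖ < ‖B + C‖ := by
    have hCε : C.rayleighQuotient u = ε := by
      simp only [rayleighQuotient, reApplyInnerSelf_apply, hCu, inner_smul_left,
        inner_self_eq_norm_sq_to_K, hu]
      simp
    calc ‖B‖ < B.rayleighQuotient u + C.rayleighQuotient u := by linarith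
      _ = (B + C).rayleighQuotient u := (B.rayleighQuotient_add C).symm
      _ ≤ ‖B + C‖ := (le_abs_self _).trans ((B + C).rayleighQuotient_le_norm u)
  have hC' : C = ((ε : ℂ) • innerSL ℂ u).smulRight u := by ext; simp [C, mul_smul]
  refine ⟨C, hC.isSelfAdjoint, hC.re_inner_nonneg_right, ?_, ?_, ?_⟩
  · rw [toLinearMap_smul, LinearMap.range_smul _ _ (by exact_mod_cast hε.ne')]
    exact Module.finrank_eq_of_rank_eq (rank_rankOne hu0 hu0)
  · simp [C, norm_smul, hu, abs_of_pos hε]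
  · rw [hC'] at hC hBC ⊢
    exact (hB.add hC).exists_apply_eq_norm_smul_of_add_smulRight hBC
end

section
/- The set of norm attaining bounded operators on a Hilbert space H is dense in B(H) with respect to the operator norm: for every T ∈ B(H) and ε > 0 there exists K ∈ B(H) with ‖K‖ ≤ ε such that T + K attains its norm. -/
set_option maxHeartbeats 1000000 in
theorem norm_attaining_dense
    {H : Type*} [NormedAddCommGroup H] [InnerProductSpace ℂ H] [CompleteSpace H]
    [Nontrivial H] (T : H →L[ℂ] H) (ε : ℝ) (hε : 0 < ε) :
    ∃ K : H →L[ℂ] H, ‖K‖ ≤ ε ∧ ∃ x₀ : H, ‖x₀‖ = 1 ∧ ‖(T + K) x₀‖ = ‖T + K‖ := by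
  by_cases hT : T = 0
  · obtain ⟨x₀, hx₀⟩ := exists_norm_eq H (zero_le_one (α := ℝ))
    exact ⟨0, by simpa using hε.le, x₀, hx₀, by simp [hT]⟩
  haveI : Nontrivial (H →L[ℂ] H) := by
    obtain ⟨y, hy⟩ := exists_ne (0 : H)
    exact ⟨1, 0, fun h => hy (by simpa using ContinuousLinearMap.ext_iff.mp h y)⟩
  have ha : 0 < ‖T‖ := norm_pos_iff.mpr hT
  set a := ‖T‖ with ha_def
  set B := star T * T with hB_def
  have hB : 0 ≤ B := star_mul_self_nonneg T
  have hBsa : IsSelfAdjoint B := IsSelfAdjoint.star_mul_self T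
  have hBnorm : ‖B‖ = a ^ 2 := by rw [hB_def, CStarRing.norm_star_mul_self]; ring
  set s := a - min ε a / 2 with hs_def
  have hmin : 0 < min ε a := lt_min hε ha
  have hs0 : 0 < s := by have := min_le_right ε a; simp only [hs_def]; linarith
  have hsa : s < a := by simp only [hs_def]; linarith
  set τ := s ^ 2 with hτ_def
  have hτ0 : 0 < τ := pow_pos hs0 2
  have hτa : τ < a ^ 2 := by simp only [hτ_def]; nlinarith
  have hσ : ∀ t ∈ spectrum ℝ B, 0 ≤ t ∧ t ≤ a ^ 2 := fun t ht =>
    ⟨spectrum_nonneg_of_nonneg hB ht, by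
      have h1 := spectrum.norm_le_norm_of_mem ht
      rw [hBnorm] at h1; exact (Real.le_norm_self t).trans h1⟩
  set h : ℝ → ℝ := fun t => a / Real.sqrt (max t τ) with hh_def
  have hmaxpos : ∀ t : ℝ, 0 < max t τ := fun t => lt_of_lt_of_le hτ0 (le_max_right _ _)
  have hsqrtpos : ∀ t : ℝ, 0 < Real.sqrt (max t τ) := fun t => Real.sqrt_pos.mpr (hmaxpos t)
  have hcont : Continuous h := continuous_const.div
    (Real.continuous_sqrt.comp (continuous_id.max continuous_const))
    (fun t => (hsqrtpos t).ne')
  have hufacts : ∀ t ∈ spectrum ℝ B,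
      s ≤ Real.sqrt (max t τ) ∧ Real.sqrt (max t τ) ≤ a ∧ t ≤ Real.sqrt (max t τ) ^ 2 := by
    intro t ht
    obtain ⟨ht0, hta⟩ := hσ t ht
    refine ⟨?_, ?_, ?_⟩
    · calc s = Real.sqrt τ := by rw [hτ_def, Real.sqrt_sq hs0.le]
        _ ≤ _ := Real.sqrt_le_sqrt (le_max_right _ _)
    · calc Real.sqrt (max t τ) ≤ Real.sqrt (a ^ 2) :=
            Real.sqrt_le_sqrt (max_le hta hτa.le)
        _ = a := Real.sqrt_sq ha.le
    · rw [Real.sq_sqrt (hmaxpos t).le]; exact le_max_left _ _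
  have tripleProd : ∀ f : ℝ → ℝ, Continuous f →
      star (T * cfc f B) * (T * cfc f B) = cfc (fun t => f t * t * f t) B := by
    intro f hf
    have hfsa : IsSelfAdjoint (cfc f B) := cfc_predicate f B
    have h2 : cfc (fun t => f t * t * f t) B = cfc f B * B * cfc f B := by
      rw [cfc_mul (fun t => f t * t) f B (by fun_prop) hf.continuousOn,
        cfc_mul f (fun t : ℝ => t) B hf.continuousOn (by fun_prop), cfc_id' ℝ B hBsa]
    rw [star_mul, hfsa.star_eq, h2, hB_def]
    noncomm_ring
  set G := cfc h B with hG_def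
  set S := T * G with hS_def
  refine ⟨S - T, ?_, ?_⟩
  · -- ‖S - T‖ ≤ ε
    set g : ℝ → ℝ := fun t => h t - 1 with hg_def
    have hgcont : Continuous g := hcont.sub continuous_const
    have hKeq : S - T = T * cfc g B := by
      rw [hg_def, cfc_sub h (fun _ => (1:ℝ)) B hcont.continuousOn continuous_const.continuousOn,
        cfc_const_one ℝ B, mul_sub, mul_one, hS_def, hG_def]
    have hKK : star (S - T) * (S - T) = cfc (fun t => g t * t * g t) B := by
      rw [hKeq]; exact tripleProd g hgcont
    have hKnorm : ‖S - T‖ * ‖S - T‖ ≤ (a - s) ^ 2 := by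
      rw [← CStarRing.norm_star_mul_self, hKK]
      refine norm_cfc_le (by positivity) ?_
      intro t ht
      obtain ⟨ht0, hta⟩ := hσ t ht
      obtain ⟨hus, hua, htu⟩ := hufacts t ht
      set u := Real.sqrt (max t τ) with hu_def
      have hu0 : 0 < u := hsqrtpos t
      have heq : g t * t * g t = (a / u - 1) ^ 2 * t := by
        simp only [hg_def, hh_def, ← hu_def]; ring
      rw [Real.norm_eq_abs, heq, abs_of_nonneg (by positivity)]
      have h2 : (a / u - 1) ^ 2 * t ≤ (a / u - 1) ^ 2 * u ^ 2 := by
        have := sq_nonneg (a / u - 1); nlinarith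
      have h3 : (a / u - 1) ^ 2 * u ^ 2 = (a - u) ^ 2 := by
        field_simp
      have h4 : (a - u) ^ 2 ≤ (a - s) ^ 2 := by
        nlinarith [mul_nonneg (sub_nonneg.mpr hus) (by linarith : (0:ℝ) ≤ (a - s) + (a - u))]
      exact le_trans h2 (le_of_eq_of_le h3 h4)
    have h5 : ‖S - T‖ ≤ a - s := by nlinarith [norm_nonneg (S - T)]
    have h6 : a - s ≤ ε := by simp only [hs_def]; have := min_le_left ε a; linarith
    linarith
  · -- attainment
    have hSS : star S * S = cfc (fun t => h t * t * h t) B := by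
      rw [hS_def, hG_def]; exact tripleProd h hcont
    set φ : ℝ → ℝ := fun t => h t * t * h t with hφ_def
    have hφcont : Continuous φ := by fun_prop
    set τ' := (τ + a ^ 2) / 2 with hτ'_def
    have hτ'1 : τ < τ' := by simp only [hτ'_def]; linarith
    have hτ'2 : τ' < a ^ 2 := by simp only [hτ'_def]; linarith
    set e : ℝ → ℝ := fun t => max 0 (min 1 ((t - τ') / (a ^ 2 - τ'))) with he_def
    have he_cont : Continuous e := by fun_prop
    have he_top : e (a ^ 2) = 1 := by
      simp only [he_def]
      rw [div_self (by linarith), min_self, max_eq_right zero_le_one]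
    have hmul : ∀ t, φ t * e t = a ^ 2 * e t := by
      intro t
      by_cases hte : e t = 0
      · rw [hte, mul_zero, mul_zero]
      · have ht' : τ' < t := by
          by_contra hle
          push_neg at hle
          apply hte
          simp only [he_def, max_eq_left_iff]
          exact le_trans (min_le_right _ _)
            (div_nonpos_of_nonpos_of_nonneg (by linarith) (by linarith))
        have ht0 : 0 < t := lt_trans (lt_trans hτ0 hτ'1) ht'
        have hmax : max t τ = t := max_eq_left (by linarith)
        have hst : Real.sqrt t * Real.sqrt t = t := Real.mul_self_sqrt ht0.le
        have hsne : Real.sqrt t ≠ 0 := by positivity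
        have hφt : φ t = a ^ 2 := by
          simp only [hφ_def, hh_def, hmax]
          field_simp
          nlinarith [hst]
        rw [hφt]
    have heig_op : cfc φ B * cfc e B = (a ^ 2 : ℝ) • cfc e B := by
      rw [← cfc_mul φ e B hφcont.continuousOn he_cont.continuousOn,
        cfc_congr (fun t _ => hmul t), cfc_const_mul (a ^ 2) e B he_cont.continuousOn]
    have ha2σ : a ^ 2 ∈ spectrum ℝ B := hBnorm ▸ CStarAlgebra.norm_mem_spectrum_of_nonneg hB
    have hebne : cfc e B ≠ 0 := by
      intro h0
      have h1 : ‖e (a ^ 2)‖ ≤ ‖cfc e B‖ :=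
        norm_apply_le_norm_cfc e B ha2σ he_cont.continuousOn hBsa
      rw [he_top, h0, norm_zero, norm_one] at h1
      linarith
    obtain ⟨x, hx⟩ : ∃ x, cfc e B x ≠ 0 := by
      by_contra hc
      push_neg at hc
      exact hebne (ContinuousLinearMap.ext fun x => by simpa using hc x)
    set y := cfc e B x with hy_def
    have heig : (star S * S) y = (a ^ 2 : ℝ) • y := by
      rw [hy_def, hSS, ← ContinuousLinearMap.mul_apply, heig_op]
      simp
    set x₀ : H := (‖y‖⁻¹ : ℝ) • y with hx₀_def
    have hx₀norm : ‖x₀‖ = 1 := by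
      rw [hx₀_def, norm_smul, norm_inv, Real.norm_eq_abs, abs_of_nonneg (norm_nonneg y),
        inv_mul_cancel₀ (norm_ne_zero_iff.mpr hx)]
    have heig₀ : (star S * S) x₀ = (a ^ 2 : ℝ) • x₀ := by
      rw [hx₀_def, ContinuousLinearMap.map_smul_of_tower, heig, smul_comm]
    have hSx₀ : ‖S x₀‖ = a := by
      have hinner : (‖S x₀‖ : ℂ) ^ 2 = ((a ^ 2 : ℝ) : ℂ) := by
        calc (‖S x₀‖ : ℂ) ^ 2 = @inner ℂ _ _ (S x₀) (S x₀) :=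
              (inner_self_eq_norm_sq_to_K (S x₀)).symm
          _ = @inner ℂ _ _ ((ContinuousLinearMap.adjoint S) (S x₀)) x₀ :=
              (ContinuousLinearMap.adjoint_inner_left S x₀ (S x₀)).symm
          _ = @inner ℂ _ _ ((star S * S) x₀) x₀ := rfl
          _ = @inner ℂ _ _ (((a ^ 2 : ℝ) : ℂ) • x₀) x₀ := by
              rw [heig₀, RCLike.real_smul_eq_coe_smul (K := ℂ)]
              exact rfl
          _ = ((a ^ 2 : ℝ) : ℂ) := by
              rw [inner_smul_left, inner_self_eq_norm_sq_to_K, hx₀norm, Complex.conj_ofReal]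
              push_cast; ring
      have h2 : ‖S x₀‖ ^ 2 = a ^ 2 := by
        exact_mod_cast (by exact_mod_cast hinner : ((‖S x₀‖ ^ 2 : ℝ) : ℂ) = ((a ^ 2 : ℝ) : ℂ))
      have h3 := congrArg Real.sqrt h2
      rwa [Real.sqrt_sq (norm_nonneg _), Real.sqrt_sq ha.le] at h3
    have hSle : ‖S‖ ≤ a := by
      have h1 : ‖S‖ * ‖S‖ ≤ a ^ 2 := by
        rw [← CStarRing.norm_star_mul_self, hSS]
        refine norm_cfc_le (by positivity) ?_
        intro t ht
        obtain ⟨ht0, hta⟩ := hσ t ht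
        obtain ⟨hus, hua, htu⟩ := hufacts t ht
        set u := Real.sqrt (max t τ) with hu_def
        have hu0 : 0 < u := hsqrtpos t
        simp only [hφ_def]
        have heq : h t * t * h t = (a / u) ^ 2 * t := by
          simp only [hh_def, ← hu_def]; ring
        rw [Real.norm_eq_abs, heq, abs_of_nonneg (by positivity)]
        have h2 : (a / u) ^ 2 * t ≤ (a / u) ^ 2 * u ^ 2 := by
          have := sq_nonneg (a / u); nlinarith
        have h3 : (a / u) ^ 2 * u ^ 2 = a ^ 2 := by field_simp
        exact le_trans h2 (le_of_eq h3)
      nlinarith [norm_nonneg S]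
    have hSge : a ≤ ‖S‖ := by
      have h1 := S.le_opNorm x₀
      rw [hSx₀, hx₀norm, mul_one] at h1
      exact h1
    have hTK : T + (S - T) = S := by abel
    rw [hTK]
    exact ⟨x₀, hx₀norm, by rw [hSx₀, le_antisymm hSle hSge]⟩
end

section
/- Let T be a bounded operator on a Hilbert space H and suppose there is a sequence of unit vectors (xₙ) with ⟨xₙ, Txₙ⟩ → q where |q| = ‖T‖ and q ≠ 0, and such that Txₙ converges to some y. Then ‖y‖ = |q|, Txₙ − q·xₙ → 0, and y is an eigenvector of T with eigenvalue q. -/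
/-! Since `‖T x‖ ≤ ‖T‖ = |q|` for a unit vector `x`, expanding the square gives
`‖T x - q x‖² ≤ 2 (|q|² - Re (q̄ ⟪x, T x⟫))`, which tends to `0`. Hence `q xₙ → y`, so
`xₙ → q⁻¹ y`, a unit vector, and continuity of `T` gives `T (q⁻¹ y) = y`. -/

open Filter Topology ComplexConjugate

section RCLike

variable {𝕜 E : Type*} [RCLike 𝕜] [NormedAddCommGroup E] [InnerProductSpace 𝕜 E]

open RCLike

theorem norm_apply_sub_smul_sq_le (T : E →L[𝕜] E) {q : 𝕜} (hT : ‖T‖ ≤ ‖q‖) {v : E}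
    (hv : ‖v‖ = 1) :
    ‖T v - q • v‖ ^ 2 ≤ 2 * (‖q‖ ^ 2 - re (conj q * inner 𝕜 v (T v))) := by
  have hTv : ‖T v‖ ≤ ‖q‖ := (T.le_opNorm v).trans (by rwa [hv, mul_one])
  have hcross : re (inner 𝕜 (T v) (q • v)) = re (conj q * inner 𝕜 v (T v)) := by
    rw [inner_smul_right, ← inner_conj_symm, ← conj_re, map_mul, conj_conj]
  have hTv_sq : ‖T v‖ ^ 2 ≤ ‖q‖ ^ 2 := pow_le_pow_left₀ (norm_nonneg _) hTv 2
  rw [@norm_sub_sq 𝕜, hcross, norm_smul, hv, mul_one]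
  linarith

theorem tendsto_apply_sub_smul_nhds_zero {ι : Type*} {l : Filter ι} (T : E →L[𝕜] E) {q : 𝕜}
    (hT : ‖T‖ ≤ ‖q‖) {x : ι → E} (hx : ∀ n, ‖x n‖ = 1)
    (hq : Tendsto (fun n => inner 𝕜 (x n) (T (x n))) l (𝓝 q)) :
    Tendsto (fun n => T (x n) - q • x n) l (𝓝 0) := by
  have hre : Tendsto (fun n => re (conj q * inner 𝕜 (x n) (T (x n)))) l
      (𝓝 (‖q‖ ^ 2)) := by
    have := (continuous_re.tendsto _).comp (hq.const_mul (conj q))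
    rwa [RCLike.conj_mul, ← ofReal_pow, ofReal_re] at this
  have hbound : Tendsto (fun n => 2 * (‖q‖ ^ 2 - re (conj q * inner 𝕜 (x n) (T (x n)))))
      l (𝓝 0) := by
    convert (tendsto_const_nhds.sub hre).const_mul (2 : ℝ)
    ring
  have hsq : Tendsto (fun n => ‖T (x n) - q • x n‖ ^ 2) l (𝓝 0) :=
    squeeze_zero (fun _ => sq_nonneg _) (fun n => norm_apply_sub_smul_sq_le T hT (hx n)) hbound
  rw [tendsto_zero_iff_norm_tendsto_zero]
  simpa using hsq.sqrt

end RCLike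

theorem tendsto_inv_smul_of_tendsto_sub_smul {𝕜 E ι : Type*} [NormedField 𝕜]
    [NormedAddCommGroup E] [NormedSpace 𝕜 E] {l : Filter ι} {f x : ι → E} {q : 𝕜} {y : E}
    (hq : q ≠ 0) (hfx : Tendsto (fun n => f n - q • x n) l (𝓝 0)) (hf : Tendsto f l (𝓝 y)) :
    Tendsto x l (𝓝 (q⁻¹ • y)) := by
  have hqx : Tendsto (fun n => q • x n) l (𝓝 y) := by simpa using hf.sub hfx
  simpa [smul_smul, inv_mul_cancel₀ hq] using hqx.const_smul q⁻¹

theorem limit_is_eigenvector_general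
    {H : Type*} [NormedAddCommGroup H] [InnerProductSpace ℂ H]
    (T : H →L[ℂ] H) (x : ℕ → H) (hx : ∀ n, ‖x n‖ = 1) (q : ℂ) (y : H)
    (hq : Filter.Tendsto (fun n => (inner ℂ (x n) (T (x n)) : ℂ)) Filter.atTop (nhds q))
    (hqnorm : ‖q‖ = ‖T‖) (hq0 : q ≠ 0)
    (hy : Filter.Tendsto (fun n => T (x n)) Filter.atTop (nhds y)) :
    ‖y‖ = ‖q‖ ∧
      Filter.Tendsto (fun n => T (x n) - q • x n) Filter.atTop (nhds 0) ∧
      y ≠ 0 ∧ T y = q • y := by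
  have happrox := tendsto_apply_sub_smul_nhds_zero T hqnorm.ge hx hq
  have hlim : Tendsto x atTop (𝓝 (q⁻¹ • y)) := tendsto_inv_smul_of_tendsto_sub_smul hq0 happrox hy
  have hunit : ‖q⁻¹ • y‖ = 1 := tendsto_nhds_unique hlim.norm (by simp [hx])
  have hTlim : T (q⁻¹ • y) = y := tendsto_nhds_unique ((T.continuous.tendsto _).comp hlim) hy
  have hynorm : ‖y‖ = ‖q‖ := by
    rwa [norm_smul, norm_inv, inv_mul_eq_one₀ (norm_ne_zero_iff.mpr hq0), eq_comm] at hunit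
  refine ⟨hynorm, happrox, ?_, ?_⟩
  · rw [← norm_ne_zero_iff, hynorm]
    exact norm_ne_zero_iff.mpr hq0
  · rw [← hTlim, ← map_smul, smul_smul, mul_inv_cancel₀ hq0, one_smul, hTlim]

theorem limit_is_eigenvector
    {H : Type*} [NormedAddCommGroup H] [InnerProductSpace ℂ H] [CompleteSpace H]
    (T : H →L[ℂ] H) (x : ℕ → H) (hx : ∀ n, ‖x n‖ = 1) (q : ℂ) (y : H)
    (hq : Filter.Tendsto (fun n => (inner ℂ (x n) (T (x n)) : ℂ)) Filter.atTop (nhds q))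
    (hqnorm : ‖q‖ = ‖T‖) (hq0 : q ≠ 0)
    (hy : Filter.Tendsto (fun n => T (x n)) Filter.atTop (nhds y)) :
    ‖y‖ = ‖q‖ ∧
      Filter.Tendsto (fun n => T (x n) - q • x n) Filter.atTop (nhds 0) ∧
      y ≠ 0 ∧ T y = q • y :=
  limit_is_eigenvector_general T x hx q y hq hqnorm hq0 hy
end
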